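/- Let G be a K4-free 1-plane graph of order n ≥ 3. Then A(G) ≥ −x, where x is the number of fake vertices of the planarization G^× (equivalently, the number of crossings in the drawing); in particular, a(z) ≥ 1 for every fake vertex z of G^×. -/

import Mathlib

open SimpleGraph

/-- Reversal of darts, as a permutation of the darts of a graph. -/
def dartReversal {V : Type*} (G : SimpleGraph V) : Equiv.Perm G.Dart :=
  Function.Involutive.toPerm _ (Dart.symm_involutive (G := G))

/-- The face-traversal permutation of a rotation system `rot`: the dart following `d` on
the boundary walk of the face to its left is `rot d.symm`. -/
def facePerm {V : Type*} (G : SimpleGraph V) (rot : Equiv.Perm G.Dart) :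
    Equiv.Perm G.Dart :=
  (dartReversal G).trans rot

/-- The faces of a rotation system: the orbits of the face-traversal permutation, viewed
as sets of darts.  The degree of a face (the number of edge-occurrences on its boundary
walk) is the number of darts in the orbit, i.e. `F.ncard`; the occurrences of a vertex `w`
on the boundary walk of `F` correspond to the darts `d ∈ F` with tail `d.toProd.1 = w`. -/
def facesOf {V : Type*} (G : SimpleGraph V) (rot : Equiv.Perm G.Dart) :
    Set (Set G.Dart) :=
  {F | ∃ d : G.Dart, F = {d' | (facePerm G rot).SameCycle d d'}}

/-- The face (orbit of the face-traversal permutation) containing a given dart. -/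
def faceOf {V : Type*} (G : SimpleGraph V) (rot : Equiv.Perm G.Dart) (d : G.Dart) :
    Set G.Dart :=
  {d' | (facePerm G rot).SameCycle d d'}

/-- A plane graph structure (planar embedding) on a simple graph `G`, given combinatorially
by a rotation system: a permutation of the darts that fixes tails of darts and whose cycles
are precisely the sets of darts at each vertex, which satisfies Euler's formula (this is
exactly the condition that the embedding determined by the rotation system has genus zero,
i.e. is an embedding in the plane). -/
structure SimpleGraph.PlaneEmbedding {V : Type*} [Fintype V] (G : SimpleGraph V) where
  /-- the rotation: the next dart (counterclockwise) around the tail vertex -/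
  rot : Equiv.Perm G.Dart
  rot_fixes_tail : ∀ d : G.Dart, (rot d).toProd.1 = d.toProd.1
  rot_single_cycle : ∀ d d' : G.Dart, d.toProd.1 = d'.toProd.1 → rot.SameCycle d d'
  /-- Euler's formula, componentwise (components with no edge contribute `1` each, the
  others `2` each); equivalently, every component is embedded with genus zero. -/
  euler : (Fintype.card V : ℤ) - Nat.card G.edgeSet + (facesOf G rot).ncard =
    Nat.card G.ConnectedComponent +
      Nat.card {C : G.ConnectedComponent //
        ∃ d : G.Dart, G.connectedComponentMk d.toProd.1 = C}
/-- Given a rotation system `rot` on a graph `H` whose vertices are the true vertices `V`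
together with the fake vertices `X` (the crossings), `CrossPair rot x u v` says that the
darts from the fake vertex `x` towards `u` and towards `v` are opposite around `x` (i.e.
the segments `xu` and `xv` are the two halves of one original edge `uv` crossed at `x`). -/
def CrossPair {V X : Type*} {H : SimpleGraph (V ⊕ X)} (rot : Equiv.Perm H.Dart)
    (x : X) (u v : V) : Prop :=
  ∃ d : H.Dart, d.toProd = (Sum.inr x, Sum.inl u) ∧
    (rot (rot d)).toProd = (Sum.inr x, Sum.inl v)

/-- A 1-plane structure on a simple graph `G` (i.e. a 1-planar drawing of `G`, recorded
combinatorially via its planarization): a plane embedding of a graph `H` on the vertex set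
`V ⊕ X`, where `V` are the true vertices of `G` and `X` are the fake vertices (one for each
crossing of the drawing), such that every fake vertex has degree `4` (exactly two edges
cross at each crossing point), fake vertices are pairwise non-adjacent (each edge of `G` is
crossed at most once, so each half-edge at a crossing ends at a true vertex), and the edges
of `G` are exactly the uncrossed edges of `H` between true vertices together with, for each
fake vertex `x`, the two edges joining the two pairs of opposite neighbours of `x` (each
crossed edge of `G` being subdivided by exactly one fake vertex). -/
structure OnePlaneStructure {V X : Type*} [Fintype V] [Fintype X]
    (G : SimpleGraph V) (H : SimpleGraph (V ⊕ X)) where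
  /-- the plane embedding of the planarization `H = G^×` -/
  emb : H.PlaneEmbedding
  fake_degree : ∀ x : X, Nat.card {d : H.Dart // d.toProd.1 = Sum.inr x} = 4
  fake_not_adjacent : ∀ x y : X, ¬ H.Adj (Sum.inr x) (Sum.inr y)
  adj_iff : ∀ u v : V, G.Adj u v ↔
    (H.Adj (Sum.inl u) (Sum.inl v) ∨ ∃ x : X, CrossPair emb.rot x u v)
  uncrossed_not_crossed : ∀ u v : V, H.Adj (Sum.inl u) (Sum.inl v) →
    ∀ x : X, ¬ CrossPair emb.rot x u v
  cross_unique : ∀ (x x' : X) (u v : V),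
    CrossPair emb.rot x u v → CrossPair emb.rot x' u v → x = x'

namespace OnePlaneStructure

variable {V X : Type*} [Fintype V] [Fintype X] {G : SimpleGraph V}
  {H : SimpleGraph (V ⊕ X)}

/-- `a(z)`: the number of incidences, counted with multiplicity, of the fake vertex `z`
with the `4⁺`-faces of the planarization. -/
noncomputable def aVal (S : OnePlaneStructure G H) (z : X) : ℕ :=
  {d : H.Dart | d.toProd.1 = Sum.inr z ∧ 4 ≤ (faceOf H S.emb.rot d).ncard}.ncard

/-- `c(F)`: the number of occurrences of fake vertices on the boundary walk of `F`. -/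
noncomputable def cVal (F : Set H.Dart) : ℕ :=
  {d ∈ F | (d.toProd.1).isRight = true}.ncard

/-- `A(G) = Σ_{z fake} (a(z) − 2)` (as an integer). -/
noncomputable def AVal (S : OnePlaneStructure G H) : ℤ := ∑ z : X, ((S.aVal z : ℤ) - 2)

end OnePlaneStructure

/-! If `a(z) = 0`, all four faces at the crossing `z` are triangles.  The four true neighbours
of `z` are then pairwise adjacent in `G`: cyclically consecutive ones through the triangular
faces, opposite ones because they are the ends of the two edges crossing at `z`.  This is a
`K₄`, so `a(z) ≥ 1` for every fake vertex, and summing `a(z) - 2 ≥ -1` gives `A(G) ≥ -x`. -/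

instance SimpleGraph.Dart.finite {V : Type*} [Finite V] (G : SimpleGraph V) :
    Finite G.Dart :=
  Finite.of_injective _ Dart.toProd_injective

theorem Equiv.Perm.pow_ncard_setOf_sameCycle_apply_self {α : Type*} [Finite α]
    (f : Equiv.Perm α) (x : α) : (f ^ {y | f.SameCycle x y}.ncard) x = x := by
  classical
  have := Fintype.ofFinite α
  by_cases hx : f x = x
  · have hsingle : {y | f.SameCycle x y} = {x} :=
      Set.eq_singleton_iff_unique_mem.2 ⟨Equiv.Perm.SameCycle.refl f x,
        fun y hy => (hy.eq_of_left hx).symm⟩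
    rwa [hsingle, Set.ncard_singleton, pow_one]
  · have hsupp : {y | f.SameCycle x y} = ↑(f.cycleOf x).support := by
      ext y
      exact (Equiv.Perm.mem_support_cycleOf_iff' hx).symm
    rw [hsupp, Set.ncard_coe_finset, ← Equiv.Perm.pow_mod_card_support_cycleOf_self_apply,
      Nat.mod_self, pow_zero, Equiv.Perm.one_apply]

section RotationSystem

variable {W : Type*} {K : SimpleGraph W} {rot : Equiv.Perm K.Dart} {d : K.Dart}

theorem facePerm_apply (rot : Equiv.Perm K.Dart) (d : K.Dart) :
    facePerm K rot d = rot d.symm :=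
  rfl

theorem fst_facePerm (hrot : ∀ d : K.Dart, (rot d).toProd.1 = d.toProd.1) (d : K.Dart) :
    (facePerm K rot d).toProd.1 = d.toProd.2 := by
  rw [facePerm_apply, hrot, Dart.symm_toProd, Prod.fst_swap]

theorem facePerm_apply_ne_self (hrot : ∀ d : K.Dart, (rot d).toProd.1 = d.toProd.1)
    (d : K.Dart) : facePerm K rot d ≠ d := fun h =>
  K.ne_of_adj d.adj ((congrArg (·.toProd.1) h).symm.trans (fst_facePerm hrot d))

theorem apply_eq_self_of_facePerm_facePerm (hrot : ∀ d : K.Dart, (rot d).toProd.1 = d.toProd.1)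
    (h : facePerm K rot (facePerm K rot d) = d) : rot d = d := by
  have hsymm : facePerm K rot d = d.symm := by
    refine Dart.toProd_injective (Prod.ext (fst_facePerm hrot d) ?_)
    rw [← fst_facePerm hrot, h, Dart.symm_toProd, Prod.snd_swap]
  rwa [hsymm, facePerm_apply, Dart.symm_symm] at h

theorem adj_snd_of_facePerm_cube (hrot : ∀ d : K.Dart, (rot d).toProd.1 = d.toProd.1)
    (h : facePerm K rot (facePerm K rot (facePerm K rot d)) = d) :
    K.Adj d.toProd.2 (rot.symm d).toProd.2 := by
  have hprev : rot.symm d = (facePerm K rot (facePerm K rot d)).symm := by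
    rw [Equiv.symm_apply_eq, ← facePerm_apply, h]
  rw [hprev, Dart.symm_toProd, Prod.snd_swap, fst_facePerm hrot, ← fst_facePerm hrot d]
  exact (facePerm K rot d).adj

theorem adj_snd_of_ncard_faceOf_le_three [Finite W]
    (hrot : ∀ d : K.Dart, (rot d).toProd.1 = d.toProd.1) (hd : rot d ≠ d)
    (hface : (faceOf K rot d).ncard ≤ 3) : K.Adj d.toProd.2 (rot.symm d).toProd.2 := by
  have hpow := (facePerm K rot).pow_ncard_setOf_sameCycle_apply_self d
  have hpos : 0 < (faceOf K rot d).ncard :=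
    (Set.ncard_pos (Set.toFinite _)).2 ⟨d, Equiv.Perm.SameCycle.refl _ d⟩
  change (facePerm K rot ^ (faceOf K rot d).ncard) d = d at hpow
  interval_cases (faceOf K rot d).ncard
  · exact absurd hpow (facePerm_apply_ne_self hrot d)
  · exact absurd (apply_eq_self_of_facePerm_facePerm hrot hpow) hd
  · exact adj_snd_of_facePerm_cube hrot hpow

end RotationSystem

theorem SimpleGraph.PlaneEmbedding.sameCycle_rot_iff {V : Type*} [Fintype V]
    {K : SimpleGraph V} (E : K.PlaneEmbedding) {d d' : K.Dart} :
    E.rot.SameCycle d d' ↔ d.toProd.1 = d'.toProd.1 := by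
  refine ⟨fun h => ?_, E.rot_single_cycle d d'⟩
  obtain ⟨i, -, rfl⟩ := h.exists_pow_eq'
  rw [Equiv.Perm.coe_pow]
  exact (congrFun (Function.iterate_invariant (g := fun d : K.Dart => d.toProd.1)
    (funext E.rot_fixes_tail) i) d).symm

namespace OnePlaneStructure

variable {V X : Type*} [Fintype V] [Fintype X] {G : SimpleGraph V}
  {H : SimpleGraph (V ⊕ X)} (S : OnePlaneStructure G H) {z : X} {d : H.Dart} {u v : V}

theorem ncard_setOf_fst_eq_inr (S : OnePlaneStructure G H) (z : X) :
    {d : H.Dart | d.toProd.1 = Sum.inr z}.ncard = 4 :=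
  (Nat.card_coe_set_eq _).symm.trans (S.fake_degree z)

theorem ncard_setOf_sameCycle_rot (hd : d.toProd.1 = Sum.inr z) :
    {d' | S.emb.rot.SameCycle d d'}.ncard = 4 := by
  simp_rw [S.emb.sameCycle_rot_iff, hd, eq_comm (a := Sum.inr z)]
  exact S.ncard_setOf_fst_eq_inr z

theorem rot_apply_ne_self (hd : d.toProd.1 = Sum.inr z) : S.emb.rot d ≠ d := by
  intro hfix
  have hsingle : {d' | S.emb.rot.SameCycle d d'} ⊆ {d} := fun d' hd' => (hd'.eq_of_left hfix).symm
  have := Set.ncard_le_ncard hsingle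
  rw [S.ncard_setOf_sameCycle_rot hd, Set.ncard_singleton] at this
  omega

theorem rot_pow_four_apply (hd : d.toProd.1 = Sum.inr z) : (S.emb.rot ^ 4) d = d := by
  simpa only [S.ncard_setOf_sameCycle_rot hd] using
    S.emb.rot.pow_ncard_setOf_sameCycle_apply_self d

theorem exists_snd_eq_inl (S : OnePlaneStructure G H) (hd : d.toProd.1 = Sum.inr z) :
    ∃ u, d.toProd.2 = Sum.inl u := by
  rcases hsnd : d.toProd.2 with u | y
  · exact ⟨u, rfl⟩
  · have := d.adj
    rw [hd, hsnd] at this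
    exact absurd this (S.fake_not_adjacent z y)

theorem adj_of_snd_rot_rot (hd : d.toProd.1 = Sum.inr z) (hu : d.toProd.2 = Sum.inl u)
    (hv : (S.emb.rot (S.emb.rot d)).toProd.2 = Sum.inl v) : G.Adj u v :=
  (S.adj_iff u v).2 <| Or.inr ⟨z, d, Prod.ext hd hu,
    Prod.ext (by rw [S.emb.rot_fixes_tail, S.emb.rot_fixes_tail, hd]) hv⟩

theorem adj_of_snd_rot_symm (hz : S.aVal z = 0) (hd : d.toProd.1 = Sum.inr z)
    (hu : d.toProd.2 = Sum.inl u) (hv : (S.emb.rot.symm d).toProd.2 = Sum.inl v) :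
    G.Adj u v := by
  have hface : (faceOf H S.emb.rot d).ncard ≤ 3 := by
    by_contra! h4
    rw [aVal, Set.ncard_eq_zero] at hz
    exact hz.subset ⟨hd, h4⟩
  have hH := adj_snd_of_ncard_faceOf_le_three S.emb.rot_fixes_tail (S.rot_apply_ne_self hd) hface
  rw [hu, hv] at hH
  exact (S.adj_iff u v).2 (Or.inl hH)

theorem not_cliqueFree_four_of_aVal_eq_zero (hz : S.aVal z = 0) : ¬ G.CliqueFree 4 := by
  classical
  set rot := S.emb.rot
  obtain ⟨d₁, hd₁⟩ : {d : H.Dart | d.toProd.1 = Sum.inr z}.Nonempty := by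
    rw [← Set.ncard_pos, S.ncard_setOf_fst_eq_inr z]
    norm_num
  have hd₂ : (rot d₁).toProd.1 = Sum.inr z := (S.emb.rot_fixes_tail _).trans hd₁
  have hd₃ : (rot (rot d₁)).toProd.1 = Sum.inr z := (S.emb.rot_fixes_tail _).trans hd₂
  have hd₄ : (rot (rot (rot d₁))).toProd.1 = Sum.inr z := (S.emb.rot_fixes_tail _).trans hd₃
  obtain ⟨u₁, hu₁⟩ := S.exists_snd_eq_inl hd₁
  obtain ⟨u₂, hu₂⟩ := S.exists_snd_eq_inl hd₂
  obtain ⟨u₃, hu₃⟩ := S.exists_snd_eq_inl hd₃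
  obtain ⟨u₄, hu₄⟩ := S.exists_snd_eq_inl hd₄
  have hprev : rot.symm d₁ = rot (rot (rot d₁)) := by
    rw [Equiv.symm_apply_eq]
    simpa only [pow_succ, pow_zero, one_mul, Equiv.Perm.mul_apply] using
      (S.rot_pow_four_apply hd₁).symm
  have h12 := S.adj_of_snd_rot_symm hz hd₂ hu₂ (by rwa [Equiv.symm_apply_apply])
  have h23 := S.adj_of_snd_rot_symm hz hd₃ hu₃ (by rwa [Equiv.symm_apply_apply])
  have h34 := S.adj_of_snd_rot_symm hz hd₄ hu₄ (by rwa [Equiv.symm_apply_apply])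
  have h41 := S.adj_of_snd_rot_symm hz hd₁ hu₁ (by rwa [hprev])
  have h13 := S.adj_of_snd_rot_rot hd₁ hu₁ hu₃
  have h24 := S.adj_of_snd_rot_rot hd₂ hu₂ hu₄
  intro hK4
  refine hK4 {u₁, u₂, u₃, u₄}
    ((is3Clique_triple_iff.2 ⟨h23.symm, h24, h34.symm⟩).insert ?_)
  simp only [Finset.mem_insert, Finset.mem_singleton, forall_eq_or_imp, forall_eq]
  exact ⟨h12.symm, h13, h41⟩

end OnePlaneStructure

theorem k4free_one_plane_A_lower_bound_general {V X : Type*} [Fintype V] [Fintype X]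
    (G : SimpleGraph V) (H : SimpleGraph (V ⊕ X)) (S : OnePlaneStructure G H)
    (hK4 : G.CliqueFree 4) :
    -(Fintype.card X : ℤ) ≤ S.AVal ∧ ∀ z : X, 1 ≤ S.aVal z := by
  have ha : ∀ z : X, 1 ≤ S.aVal z := fun z =>
    Nat.one_le_iff_ne_zero.2 fun hz => S.not_cliqueFree_four_of_aVal_eq_zero hz hK4
  refine ⟨?_, ha⟩
  calc -(Fintype.card X : ℤ) = ∑ _z : X, (-1 : ℤ) := by simp
    _ ≤ S.AVal := Finset.sum_le_sum fun z _ => by have := ha z; omega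

/-- Let `G` be a `K₄`-free 1-plane graph of order `n ≥ 3`.  Then `A(G) ≥ −x`, where `x` is
the number of fake vertices of the planarization `G^×` (the number of crossings of the
drawing); in particular `a(z) ≥ 1` for every fake vertex `z`. -/
theorem k4free_one_plane_A_lower_bound {V X : Type*} [Fintype V] [Fintype X]
    (G : SimpleGraph V) (H : SimpleGraph (V ⊕ X)) (S : OnePlaneStructure G H)
    (hn : 3 ≤ Fintype.card V) (hK4 : G.CliqueFree 4) :
    -(Fintype.card X : ℤ) ≤ S.AVal ∧ ∀ z : X, 1 ≤ S.aVal z :=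
  k4free_one_plane_A_lower_bound_general G H S hK4
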